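/- arXiv:1511.07236 — 9 statements merged into one kernel-verified Lean document; each statement's English description precedes it below -/
import Mathlib

section
/- The exact Gaussian-approximation function φ is continuous on [0,∞), strictly decreasing on [0,∞), satisfies φ(0) = 1 (equivalently, φ(t) → 1 as t → 0⁺), and φ(t) → 0 as t → ∞. -/
/-- The exact Gaussian-approximation check-node function for polar codes:
`φ(t) = 1 − (4πt)^{−1/2} ∫_ℝ tanh(z/2)·exp(−(z−t)²/(4t)) dz` for `t > 0`, with `φ(0) = 1`. -/
noncomputable def phiGA (t : ℝ) : ℝ :=
  if t = 0 then 1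
  else 1 - (Real.sqrt (4 * Real.pi * t))⁻¹ *
    ∫ z : ℝ, Real.tanh (z / 2) * Real.exp (-(z - t) ^ 2 / (4 * t))

/-!
Substituting `z = t + 2√t u` gives `φ(t) = 1 - J(√t)/√π` with
`J(s) = ∫ tanh (s²/2 + s u) e^{-u²} du`, an integral against a fixed Gaussian weight with a
bounded integrand, so continuity and the limits `J(0) = 0`, `J(s) → √π` come from dominated
convergence. Differentiating under the integral, with `θ = s²/2 + s u`,
`J'(s) = ∫ (s + u) (1 - tanh² θ) e^{-u²} du`;
Gaussian integration by parts turns the `u`-term into `-s ∫ tanh θ (1 - tanh² θ) e^{-u²} du`,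
hence `J'(s) = s ∫ (1 - tanh θ)² (1 + tanh θ) e^{-u²} du > 0` for `s > 0`.
-/

open Real MeasureTheory Filter Set Topology

namespace Real

theorem hasDerivAt_tanh (x : ℝ) : HasDerivAt tanh (1 - tanh x ^ 2) x := by
  have h := (hasDerivAt_sinh x).div (hasDerivAt_cosh x) (cosh_pos x).ne'
  rw [show sinh / cosh = tanh from funext fun y => (tanh_eq_sinh_div_cosh y).symm] at h
  refine h.congr_deriv ?_
  rw [tanh_eq_sinh_div_cosh]
  field_simp

@[fun_prop]
theorem continuous_tanh : Continuous tanh :=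
  continuous_iff_continuousAt.2 fun x => (hasDerivAt_tanh x).continuousAt

theorem tanh_eq_one_sub_two_div (x : ℝ) : tanh x = 1 - 2 / (exp (2 * x) + 1) := by
  rw [tanh_eq, show 2 * x = x + x by ring, exp_add, exp_neg]
  field_simp
  ring

theorem tendsto_tanh_atTop : Tendsto tanh atTop (𝓝 1) := by
  have h : Tendsto (fun x => exp (2 * x) + 1) atTop atTop :=
    tendsto_atTop_add_const_right _ _
      (tendsto_exp_atTop.comp (tendsto_id.const_mul_atTop two_pos))
  simpa using ((tendsto_const_nhds (x := (1 : ℝ))).sub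
    ((tendsto_const_nhds (x := (2 : ℝ))).div_atTop h)).congr
      fun x => (tanh_eq_one_sub_two_div x).symm

theorem abs_one_sub_tanh_sq_le_one (x : ℝ) : |1 - tanh x ^ 2| ≤ 1 := by
  have := tanh_sq_lt_one x
  rw [abs_le]
  constructor <;> nlinarith [sq_nonneg (tanh x)]

end Real

theorem integral_mul_exp_neg_sub_sq_div_sq (f : ℝ → ℝ) (m : ℝ) {c : ℝ} (hc : 0 < c) :
    ∫ z, f z * exp (-(z - m) ^ 2 / c ^ 2) = c * ∫ u, f (m + c * u) * exp (-u ^ 2) := by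
  set g := fun z => f z * exp (-(z - m) ^ 2 / c ^ 2)
  have hg : ∀ u, f (m + c * u) * exp (-u ^ 2) = g (c * u + m) := fun u => by
    simp only [g, add_sub_cancel_right, mul_pow, neg_div,
      mul_div_cancel_left₀ _ (pow_ne_zero 2 hc.ne'), add_comm m]
  simp_rw [hg]
  rw [Measure.integral_comp_mul_left (fun x => g (x + m)), integral_add_right_eq_self,
    abs_of_pos (inv_pos.2 hc), smul_eq_mul, mul_inv_cancel_left₀ hc.ne']

theorem integrable_exp_neg_sq : Integrable fun u : ℝ => exp (-u ^ 2) := by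
  simpa using integrable_exp_neg_mul_sq one_pos

theorem integrable_id_mul_exp_neg_sq : Integrable fun u : ℝ => u * exp (-u ^ 2) := by
  simpa using integrable_mul_exp_neg_mul_sq one_pos

theorem integrable_mul_exp_neg_sq {g : ℝ → ℝ} {C : ℝ} (hg : Continuous g)
    (hC : ∀ u, |g u| ≤ C) : Integrable fun u => g u * exp (-u ^ 2) :=
  integrable_exp_neg_sq.bdd_mul hg.aestronglyMeasurable (ae_of_all _ hC)

theorem integrable_mul_mul_exp_neg_sq {g : ℝ → ℝ} {C : ℝ} (hg : Continuous g)
    (hC : ∀ u, |g u| ≤ C) : Integrable fun u => u * g u * exp (-u ^ 2) := by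
  simpa [mul_comm, mul_left_comm, mul_assoc] using
    integrable_id_mul_exp_neg_sq.bdd_mul hg.aestronglyMeasurable (ae_of_all _ hC)

theorem integral_mul_mul_exp_neg_sq {g g' : ℝ → ℝ} {C C' : ℝ}
    (hg : ∀ u, HasDerivAt g (g' u) u) (hg' : Continuous g')
    (hgC : ∀ u, |g u| ≤ C) (hg'C : ∀ u, |g' u| ≤ C') :
    ∫ u, u * g u * exp (-u ^ 2) = (∫ u, g' u * exp (-u ^ 2)) / 2 := by
  have hgc : Continuous g := continuous_iff_continuousAt.2 fun u => (hg u).continuousAt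
  have hmoment := integrable_mul_mul_exp_neg_sq hgc hgC
  have hderiv : ∀ u, HasDerivAt (fun u => g u * exp (-u ^ 2))
      (g' u * exp (-u ^ 2) - 2 * (u * g u * exp (-u ^ 2))) u := fun u => by
    have he : HasDerivAt (fun u : ℝ => exp (-u ^ 2)) (exp (-u ^ 2) * -(2 * u)) u := by
      simpa using ((hasDerivAt_pow 2 u).neg).exp
    exact ((hg u).fun_mul he).congr_deriv (by ring)
  have h := integral_eq_zero_of_hasDerivAt_of_integrable hderiv
    ((integrable_mul_exp_neg_sq hg' hg'C).sub (hmoment.const_mul 2))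
    (integrable_mul_exp_neg_sq hgc hgC)
  rw [integral_sub (integrable_mul_exp_neg_sq hg' hg'C) (hmoment.const_mul 2),
    integral_const_mul] at h
  linarith

noncomputable def gaussianTanhIntegral (s : ℝ) : ℝ :=
  ∫ u, tanh (s ^ 2 / 2 + s * u) * exp (-u ^ 2)

theorem gaussianTanhIntegral_zero : gaussianTanhIntegral 0 = 0 := by
  simp [gaussianTanhIntegral]

theorem integrable_tanh_mul_exp_neg_sq (s : ℝ) :
    Integrable fun u => tanh (s ^ 2 / 2 + s * u) * exp (-u ^ 2) :=
  integrable_mul_exp_neg_sq (by fun_prop) fun _ => (abs_tanh_lt_one _).le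

theorem hasDerivAt_gaussianTanhIntegral (s : ℝ) :
    HasDerivAt gaussianTanhIntegral
      (∫ u, (s + u) * (1 - tanh (s ^ 2 / 2 + s * u) ^ 2) * exp (-u ^ 2)) s := by
  have hbound : Integrable fun u : ℝ => (|s| + 1 + |u|) * exp (-u ^ 2) := by
    have habs : Integrable fun u : ℝ => |u| * exp (-u ^ 2) := by
      simpa [abs_mul] using integrable_id_mul_exp_neg_sq.abs
    exact ((integrable_exp_neg_sq.const_mul (|s| + 1)).add habs).congr (ae_of_all _ fun u => by
      simp only [Pi.add_apply]; ring)
  refine (hasDerivAt_integral_of_dominated_loc_of_deriv_le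
    (F' := fun x u => (x + u) * (1 - tanh (x ^ 2 / 2 + x * u) ^ 2) * exp (-u ^ 2))
    (Metric.ball_mem_nhds s one_pos)
    (Eventually.of_forall fun x => (integrable_tanh_mul_exp_neg_sq x).aestronglyMeasurable)
    (integrable_tanh_mul_exp_neg_sq s) (by fun_prop : Continuous _).aestronglyMeasurable
    (ae_of_all _ fun u x hx => ?_) hbound (ae_of_all _ fun u x _ => ?_)).2
  · have hx : |x| ≤ |s| + 1 := by
      have := abs_sub_abs_le_abs_sub x s
      rw [← Real.dist_eq] at this
      linarith [Metric.mem_ball.1 hx]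
    have hT := abs_one_sub_tanh_sq_le_one (x ^ 2 / 2 + x * u)
    rw [Real.norm_eq_abs, abs_mul, abs_mul, abs_of_pos (exp_pos _)]
    gcongr
    calc |x + u| * |1 - tanh (x ^ 2 / 2 + x * u) ^ 2| ≤ |x + u| * 1 := by gcongr
      _ ≤ |s| + 1 + |u| := by linarith [abs_add_le x u]
  · have hθ : HasDerivAt (fun x => x ^ 2 / 2 + x * u) (x + u) x := by
      simpa using ((hasDerivAt_pow 2 x).div_const 2).fun_add ((hasDerivAt_id x).mul_const u)
    exact (((hasDerivAt_tanh _).comp x hθ).mul_const _).congr_deriv (by ring)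

theorem integral_deriv_gaussianTanhIntegral_eq (s : ℝ) :
    ∫ u, (s + u) * (1 - tanh (s ^ 2 / 2 + s * u) ^ 2) * exp (-u ^ 2) =
      s * ∫ u, (1 - tanh (s ^ 2 / 2 + s * u)) ^ 2 * (1 + tanh (s ^ 2 / 2 + s * u)) *
        exp (-u ^ 2) := by
  set T := fun u => tanh (s ^ 2 / 2 + s * u)
  have hT : Continuous T := by fun_prop
  have hT' : ∀ u, HasDerivAt T ((1 - T u ^ 2) * s) u := fun u => by
    have hθ : HasDerivAt (fun u => s ^ 2 / 2 + s * u) s u := by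
      simpa using ((hasDerivAt_id u).const_mul s).const_add (s ^ 2 / 2)
    exact (hasDerivAt_tanh _).comp u hθ
  have hsech : ∀ u, |1 - T u ^ 2| ≤ 1 := fun u => abs_one_sub_tanh_sq_le_one _
  have hsech' : ∀ u, |T u * (1 - T u ^ 2)| ≤ 1 := fun u => by
    rw [abs_mul]
    exact mul_le_one₀ (abs_tanh_lt_one _).le (abs_nonneg _) (hsech u)
  have hA := integrable_mul_exp_neg_sq (by fun_prop) hsech
  have hB := integrable_mul_exp_neg_sq (by fun_prop) hsech'
  have ibp := integral_mul_mul_exp_neg_sq (g := fun u => 1 - T u ^ 2)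
    (fun u => (((hT' u).pow 2).const_sub 1).congr_deriv (by ring)
      : ∀ u, HasDerivAt _ (-2 * s * (T u * (1 - T u ^ 2))) u)
    (by fun_prop) hsech fun u => by
      rw [abs_mul]
      exact mul_le_mul_of_nonneg_left (hsech' u) (abs_nonneg _)
  calc ∫ u, (s + u) * (1 - T u ^ 2) * exp (-u ^ 2)
      = ∫ u, (s * ((1 - T u ^ 2) * exp (-u ^ 2)) + u * (1 - T u ^ 2) * exp (-u ^ 2)) := by
        congr 1; funext u; ring
    _ = s * (∫ u, (1 - T u ^ 2) * exp (-u ^ 2)) + ∫ u, u * (1 - T u ^ 2) * exp (-u ^ 2) := by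
        rw [integral_add (hA.const_mul s) (integrable_mul_mul_exp_neg_sq (by fun_prop) hsech),
          integral_const_mul]
    _ = s * ((∫ u, (1 - T u ^ 2) * exp (-u ^ 2)) -
          ∫ u, T u * (1 - T u ^ 2) * exp (-u ^ 2)) := by
        rw [ibp]
        simp_rw [mul_assoc (-2 * s)]
        rw [integral_const_mul]
        ring
    _ = s * ∫ u, (1 - T u) ^ 2 * (1 + T u) * exp (-u ^ 2) := by
        rw [← integral_sub hA hB]
        congr 2; funext u; ring

@[fun_prop]
theorem continuous_gaussianTanhIntegral : Continuous gaussianTanhIntegral :=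
  continuous_iff_continuousAt.2 fun s => (hasDerivAt_gaussianTanhIntegral s).continuousAt

theorem strictMonoOn_gaussianTanhIntegral : StrictMonoOn gaussianTanhIntegral (Ici 0) := by
  refine strictMonoOn_of_deriv_pos (convex_Ici 0) continuous_gaussianTanhIntegral.continuousOn
    fun s hs => ?_
  rw [interior_Ici] at hs
  rw [(hasDerivAt_gaussianTanhIntegral s).deriv, integral_deriv_gaussianTanhIntegral_eq]
  set T := fun u => tanh (s ^ 2 / 2 + s * u)
  have hT : ∀ u, 0 < 1 - T u ∧ 0 < 1 + T u := fun u =>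
    ⟨sub_pos.2 (tanh_lt_one _), neg_lt_iff_pos_add'.1 (neg_one_lt_tanh _)⟩
  have hpos : ∀ u, 0 < (1 - T u) ^ 2 * (1 + T u) * exp (-u ^ 2) := fun u =>
    mul_pos (mul_pos (pow_pos (hT u).1 2) (hT u).2) (exp_pos _)
  have hbound : ∀ u, |(1 - T u) ^ 2 * (1 + T u)| ≤ 8 := fun u => by
    obtain ⟨h₁, h₂⟩ := hT u
    rw [abs_of_pos (mul_pos (pow_pos h₁ 2) h₂)]
    nlinarith [mul_pos h₁ h₂, mul_pos (mul_pos h₁ h₁) h₂]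
  exact mul_pos hs (integral_pos_of_integrable_nonneg_nonzero (x := 0) (by fun_prop)
    (integrable_mul_exp_neg_sq (by fun_prop) hbound) (fun u => (hpos u).le) (hpos 0).ne')

theorem tendsto_gaussianTanhIntegral_atTop : Tendsto gaussianTanhIntegral atTop (𝓝 √π) := by
  have hgauss : ∫ u : ℝ, exp (-u ^ 2) = √π := by simpa using integral_gaussian 1
  rw [← hgauss]
  refine tendsto_integral_filter_of_dominated_convergence (fun u => exp (-u ^ 2))
    (Eventually.of_forall fun s => (integrable_tanh_mul_exp_neg_sq s).aestronglyMeasurable)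
    (Eventually.of_forall fun s => ae_of_all _ fun u => ?_)
    integrable_exp_neg_sq (ae_of_all _ fun u => ?_)
  · rw [norm_mul, Real.norm_eq_abs, Real.norm_eq_abs, abs_of_pos (exp_pos _)]
    exact mul_le_of_le_one_left (exp_pos _).le (abs_tanh_lt_one _).le
  · have hθ : Tendsto (fun s => s ^ 2 / 2 + s * u) atTop atTop :=
      (tendsto_id.atTop_mul_atTop₀ (tendsto_atTop_add_const_right _ u
        (tendsto_id.atTop_div_const two_pos))).congr fun s => by simp only [id]; ring
    simpa using (tendsto_tanh_atTop.comp hθ).mul_const (exp (-u ^ 2))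

theorem phiGA_eq {t : ℝ} (ht : 0 ≤ t) : phiGA t = 1 - gaussianTanhIntegral √t / √π := by
  rcases ht.eq_or_lt with rfl | ht
  · simp [phiGA, gaussianTanhIntegral_zero]
  have h4t : 4 * t = (2 * √t) ^ 2 := by rw [mul_pow, sq_sqrt ht.le]; norm_num
  have hsqrt : √(4 * π * t) = 2 * √π * √t := by
    rw [sqrt_mul (by positivity), sqrt_mul (by norm_num), show (4 : ℝ) = 2 ^ 2 by norm_num,
      sqrt_sq two_pos.le]
  have hJ : ∫ u, tanh ((t + 2 * √t * u) / 2) * exp (-u ^ 2) = gaussianTanhIntegral √t := by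
    unfold gaussianTanhIntegral
    congr 1; funext u
    rw [sq_sqrt ht.le]; ring_nf
  rw [phiGA, if_neg ht.ne', h4t,
    integral_mul_exp_neg_sub_sq_div_sq (fun z => tanh (z / 2)) t (by positivity), hJ, hsqrt]
  have hs : 0 < √t := sqrt_pos.2 ht
  have hπ : 0 < √π := sqrt_pos.2 pi_pos
  field_simp

/-- `φ` is continuous on `[0,∞)`, strictly decreasing on `[0,∞)`,
satisfies `φ(0) = 1` (equivalently `φ(t) → 1` as `t → 0⁺`), and `φ(t) → 0` as `t → ∞`. -/
theorem phiGA_properties :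
    ContinuousOn phiGA (Set.Ici 0) ∧
    StrictAntiOn phiGA (Set.Ici 0) ∧
    phiGA 0 = 1 ∧
    Filter.Tendsto phiGA (nhdsWithin 0 (Set.Ioi 0)) (nhds 1) ∧
    Filter.Tendsto phiGA Filter.atTop (nhds 0) := by
  set ψ : ℝ → ℝ := fun t => 1 - gaussianTanhIntegral √t / √π
  have hψ : EqOn phiGA ψ (Ici 0) := fun _ ht => phiGA_eq ht
  have hψc : Continuous ψ := by fun_prop
  have hφ0 : phiGA 0 = 1 := if_pos rfl
  have hπ : 0 < √π := sqrt_pos.2 pi_pos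
  refine ⟨hψc.continuousOn.congr hψ, fun x hx y hy hxy => ?_, hφ0, ?_, ?_⟩
  · rw [hψ hx, hψ hy]
    exact sub_lt_sub_left (div_lt_div_of_pos_right (strictMonoOn_gaussianTanhIntegral
      (sqrt_nonneg x) (sqrt_nonneg y) (sqrt_lt_sqrt hx hxy)) hπ) 1
  · have h := (hψc.tendsto 0).mono_left (nhdsWithin_le_nhds (s := Ioi 0))
    rw [← hψ self_mem_Ici, hφ0] at h
    exact h.congr' (eventually_nhdsWithin_of_forall fun t ht => (hψ (mem_Ici_of_Ioi ht)).symm)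
  · have h := ((tendsto_gaussianTanhIntegral_atTop.comp tendsto_sqrt_atTop).div_const
      √π).const_sub 1
    rw [div_self hπ.ne', sub_self] at h
    exact h.congr' ((eventually_ge_atTop 0).mono fun t ht => (hψ ht).symm)
end

section
/- For every t > 0, the exact Gaussian-approximation function satisfies 0 < φ(t) < 1; equivalently, 0 < (4πt)^{−1/2} ∫_ℝ tanh(z/2)·exp(−(z−t)²/(4t)) dz < 1. -/
open MeasureTheory Real ProbabilityTheory NNReal Function

lemma Real.continuous_tanh_s1 : Continuous tanh :=
  (continuous_sinh.div continuous_cosh fun x ↦ (cosh_pos x).ne').congr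
    fun x ↦ (tanh_eq_sinh_div_cosh x).symm

lemma Real.tanh_pos {x : ℝ} (hx : 0 < x) : 0 < tanh x := by
  rw [tanh_eq_sinh_div_cosh]
  exact div_pos (sinh_pos_iff.2 hx) (cosh_pos x)

lemma integral_pos_of_add_comp_neg_pos {F : ℝ → ℝ} (hF : Integrable F)
    (h : ∀ x, 0 < x → 0 < F x + F (-x)) : 0 < ∫ x, F x := by
  have hsymm : ∀ x, x ≠ 0 → 0 < F x + F (-x) := by
    intro x hx
    rcases hx.lt_or_gt with hx | hx
    · simpa [add_comm] using h (-x) (neg_pos.2 hx)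
    · exact h x hx
  have hnonneg : 0 ≤ᵐ[volume] fun x ↦ F x + F (-x) := by
    filter_upwards [Measure.ae_ne volume (0 : ℝ)] with x hx using (hsymm x hx).le
  have hpos : 0 < ∫ x, (F x + F (-x)) := by
    rw [integral_pos_iff_support_of_nonneg_ae hnonneg (hF.add hF.comp_neg)]
    calc (0 : ENNReal) < volume (Set.Ioi (0 : ℝ)) := by simp
      _ ≤ _ := measure_mono fun x hx ↦ (h x hx).ne'
  rw [integral_add hF hF.comp_neg, integral_neg_eq_self F volume] at hpos
  linarith

variable {μ : ℝ} {v : ℝ≥0}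

lemma gaussianPDFReal_neg_lt (hμ : 0 < μ) (hv : v ≠ 0) {x : ℝ} (hx : 0 < x) :
    gaussianPDFReal μ v (-x) < gaussianPDFReal μ v x := by
  have hv' : (0 : ℝ) < v := by positivity
  have hc : 0 < (√(2 * π * v))⁻¹ := by positivity
  refine mul_lt_mul_of_pos_left (exp_lt_exp.2 ?_) hc
  rw [div_lt_div_iff_of_pos_right (by positivity)]
  nlinarith [mul_pos hx hμ]

lemma integral_mul_gaussianPDFReal_lt_one {f : ℝ → ℝ} (hv : v ≠ 0)
    (hf : Integrable (fun x ↦ f x * gaussianPDFReal μ v x)) (hlt : ∀ x, f x < 1) :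
    ∫ x, f x * gaussianPDFReal μ v x < 1 := by
  have hpdf := integrable_gaussianPDFReal μ v
  have hgap : 0 < ∫ x, (gaussianPDFReal μ v x - f x * gaussianPDFReal μ v x) := by
    have hpos : ∀ x, 0 < gaussianPDFReal μ v x - f x * gaussianPDFReal μ v x := fun x ↦ by
      nlinarith [hlt x, gaussianPDFReal_pos μ v x hv]
    rw [integral_pos_iff_support_of_nonneg (fun x ↦ (hpos x).le) (hpdf.sub hf),
      support_eq_univ fun x ↦ (hpos x).ne']
    simp
  rw [integral_sub hpdf hf, integral_gaussianPDFReal_eq_one μ hv] at hgap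
  linarith

lemma integral_odd_mul_gaussianPDFReal_pos {f : ℝ → ℝ} (hμ : 0 < μ) (hv : v ≠ 0)
    (hf : Integrable (fun x ↦ f x * gaussianPDFReal μ v x))
    (hodd : ∀ x, f (-x) = -f x) (hpos : ∀ x, 0 < x → 0 < f x) :
    0 < ∫ x, f x * gaussianPDFReal μ v x := by
  refine integral_pos_of_add_comp_neg_pos hf fun x hx ↦ ?_
  rw [hodd, neg_mul, ← sub_eq_add_neg, ← mul_sub]
  exact mul_pos (hpos x hx) (sub_pos.2 (gaussianPDFReal_neg_lt hμ hv hx))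

lemma inv_sqrt_mul_integral_eq_integral_mul_gaussianPDFReal (f : ℝ → ℝ) {t : ℝ} (ht : 0 ≤ t) :
    (√(4 * π * t))⁻¹ * ∫ z, f z * exp (-(z - t) ^ 2 / (4 * t)) =
      ∫ z, f z * gaussianPDFReal t (2 * t).toNNReal z := by
  rw [← integral_const_mul]
  congr 1 with z
  rw [gaussianPDFReal, coe_toNNReal _ (by positivity)]
  ring_nf

/-- for every `t > 0`, `0 < φ(t) < 1`; equivalently
`0 < (4πt)^{−1/2} ∫_ℝ tanh(z/2)·exp(−(z−t)²/(4t)) dz < 1`. -/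
theorem phiGA_mem_Ioo :
    ∀ t : ℝ, 0 < t →
      (0 < phiGA t ∧ phiGA t < 1) ∧
      (0 < (Real.sqrt (4 * Real.pi * t))⁻¹ *
            ∫ z : ℝ, Real.tanh (z / 2) * Real.exp (-(z - t) ^ 2 / (4 * t)) ∧
        (Real.sqrt (4 * Real.pi * t))⁻¹ *
            (∫ z : ℝ, Real.tanh (z / 2) * Real.exp (-(z - t) ^ 2 / (4 * t))) < 1) := by
  intro t ht
  have hv : (2 * t).toNNReal ≠ 0 := by simpa using ht
  have hphi : phiGA t = 1 - (√(4 * π * t))⁻¹ *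
      ∫ z, tanh (z / 2) * exp (-(z - t) ^ 2 / (4 * t)) := if_neg ht.ne'
  have hint : Integrable fun z ↦ tanh (z / 2) * gaussianPDFReal t (2 * t).toNNReal z :=
    (integrable_gaussianPDFReal _ _).bdd_mul (c := 1)
      (continuous_tanh_s1.comp (continuous_id.div_const 2)).aestronglyMeasurable
      (.of_forall fun z ↦ (abs_tanh_lt_one _).le)
  have hpos := integral_odd_mul_gaussianPDFReal_pos ht hv hint
    (fun _ ↦ by rw [neg_div, tanh_neg]) fun x hx ↦ tanh_pos (half_pos hx)
  have hlt := integral_mul_gaussianPDFReal_lt_one hv hint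
    fun x ↦ tanh_lt_one (x / 2)
  rw [← inv_sqrt_mul_integral_eq_integral_mul_gaussianPDFReal _ ht.le] at hpos hlt
  rw [hphi]
  exact ⟨⟨by linarith, by linarith⟩, hpos, hlt⟩
end

section
/- (Theorem 3: path-wise cumulative-logarithmic error bound.) Let p be a bit string of length m and let α be the number of 0 bits in p. Then for all x, y ∈ (0,1], |ln F_p(x) − ln F_p(y)| ≤ 2^α · |ln x − ln y|. (With x = Ĩ_r and y = I_r the initial capacities computed by AGA and EGA, this is the bound |e_n^{(k)}| ≤ 2^α |log(1 + Δ_r/I_r)| on the logarithmic capacity error after the polarization steps of p.) -/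
/-- The BEC capacity-polarization recursion along a bit string: a `0` bit (`false`)
applies the check-node map `x ↦ x²`, a `1` bit (`1`) applies the variable-node
map `x ↦ 2x − x²`. -/
def becF : List Bool → ℝ → ℝ
  | [], x => x
  | b :: bs, x => becF bs (if b then 2 * x - x ^ 2 else x ^ 2)

lemma sq_mem_Ioc {x : ℝ} (hx : x ∈ Set.Ioc (0:ℝ) 1) : x ^ 2 ∈ Set.Ioc (0:ℝ) 1 :=
  ⟨pow_pos hx.1 2, pow_le_one₀ hx.1.le hx.2⟩

lemma v_mem_Ioc {x : ℝ} (hx : x ∈ Set.Ioc (0:ℝ) 1) : 2 * x - x ^ 2 ∈ Set.Ioc (0:ℝ) 1 := by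
  obtain ⟨h1, h2⟩ := hx
  constructor <;> nlinarith

lemma v_log_le_aux {x y : ℝ} (hx : x ∈ Set.Ioc (0:ℝ) 1) (hy : y ∈ Set.Ioc (0:ℝ) 1)
    (hxy : x ≤ y) :
    |Real.log (2 * x - x ^ 2) - Real.log (2 * y - y ^ 2)| ≤ |Real.log x - Real.log y| := by
  obtain ⟨hx1, hx2⟩ := hx
  obtain ⟨hy1, hy2⟩ := hy
  have hx' : (0:ℝ) < 2 - x := by linarith
  have hy' : (0:ℝ) < 2 - y := by linarith
  have e1 : Real.log (2 * x - x ^ 2) = Real.log x + Real.log (2 - x) := by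
    rw [show 2 * x - x ^ 2 = x * (2 - x) by ring, Real.log_mul hx1.ne' hx'.ne']
  have e2 : Real.log (2 * y - y ^ 2) = Real.log y + Real.log (2 - y) := by
    rw [show 2 * y - y ^ 2 = y * (2 - y) by ring, Real.log_mul hy1.ne' hy'.ne']
  have ha : Real.log x ≤ Real.log y := Real.log_le_log hx1 hxy
  have hb : Real.log (2 - y) ≤ Real.log (2 - x) := Real.log_le_log hy' (by linarith)
  have hba : Real.log (2 - x) - Real.log (2 - y) ≤ Real.log y - Real.log x := by
    have h : Real.log (x * (2 - x)) ≤ Real.log (y * (2 - y)) :=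
      Real.log_le_log (by positivity) (by nlinarith)
    rw [Real.log_mul hx1.ne' hx'.ne', Real.log_mul hy1.ne' hy'.ne'] at h
    linarith
  rw [e1, e2, abs_sub_comm (Real.log x) (Real.log y),
    abs_of_nonneg (by linarith : (0:ℝ) ≤ Real.log y - Real.log x)]
  rw [abs_le]
  constructor <;> linarith

lemma v_log_le {x y : ℝ} (hx : x ∈ Set.Ioc (0:ℝ) 1) (hy : y ∈ Set.Ioc (0:ℝ) 1) :
    |Real.log (2 * x - x ^ 2) - Real.log (2 * y - y ^ 2)| ≤ |Real.log x - Real.log y| := by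
  rcases le_total x y with h | h
  · exact v_log_le_aux hx hy h
  · rw [abs_sub_comm, abs_sub_comm (Real.log x)]
    exact v_log_le_aux hy hx h

/-- Theorem 3: path-wise cumulative-logarithmic error bound.
Let `p` be a bit string and let `α` be the number of `0` bits in `p`.  Then for all
`x, y ∈ (0,1]`, `|ln F_p(x) − ln F_p(y)| ≤ 2^α · |ln x − ln y|`. -/
theorem pathwise_log_error_bound :
    ∀ (p : List Bool) (x y : ℝ), x ∈ Set.Ioc (0 : ℝ) 1 → y ∈ Set.Ioc (0 : ℝ) 1 →
      |Real.log (becF p x) - Real.log (becF p y)| ≤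
        (2 : ℝ) ^ (p.count false) * |Real.log x - Real.log y| := by
  intro p
  induction p with
  | nil => intro x y _ _; simp [becF]
  | cons b bs ih =>
    intro x y hx hy
    cases b with
    | false =>
      have h := ih (x ^ 2) (y ^ 2) (sq_mem_Ioc hx) (sq_mem_Ioc hy)
      have e : |Real.log (x ^ 2) - Real.log (y ^ 2)| = 2 * |Real.log x - Real.log y| := by
        rw [Real.log_pow, Real.log_pow, ← abs_two, ← abs_mul]
        push_cast
        ring_nf
      rw [e] at h
      have hc : (false :: bs).count false = bs.count false + 1 := by simp
      rw [hc]
      calc |Real.log (becF bs (x ^ 2)) - Real.log (becF bs (y ^ 2))|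
          ≤ (2:ℝ) ^ bs.count false * (2 * |Real.log x - Real.log y|) := h
        _ = (2:ℝ) ^ (bs.count false + 1) * |Real.log x - Real.log y| := by ring
    | true =>
      have h := ih (2 * x - x ^ 2) (2 * y - y ^ 2) (v_mem_Ioc hx) (v_mem_Ioc hy)
      have h2 := v_log_le hx hy
      have hc : (true :: bs).count false = bs.count false := by simp
      rw [hc]
      calc |Real.log (becF bs (2 * x - x ^ 2)) - Real.log (becF bs (2 * y - y ^ 2))|
          ≤ (2:ℝ) ^ bs.count false * |Real.log (2*x - x^2) - Real.log (2*y - y^2)| := h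
        _ ≤ (2:ℝ) ^ bs.count false * |Real.log x - Real.log y| := by
            apply mul_le_mul_of_nonneg_left h2 (by positivity)
end

section
/- (Theorem 4: upper bound on the partial cumulative-logarithmic error.) Let m ≥ 0 and let x, y ∈ (0,1]. Then the sum over all 2^m bit strings p of length m of |ln F_p(x) − ln F_p(y)| is at most 3^m · |ln x − ln y|. (With x = Ĩ_r and y = I_r the initial capacities computed by AGA and EGA, this is the bound C_{r:n} ≤ 3^{n−r}|log(1 + Δ_r/I_r)| on the partial cumulative-logarithmic error over n − r = m polarization levels.) -/
lemma step_mem (b : Bool) {x : ℝ} (hx : x ∈ Set.Ioc (0 : ℝ) 1) :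
    (if b then 2 * x - x ^ 2 else x ^ 2) ∈ Set.Ioc (0 : ℝ) 1 := by
  obtain ⟨h0, h1⟩ := hx
  cases b <;> simp only [Bool.false_eq_true, if_false, if_true] <;>
    constructor <;> nlinarith

lemma vlog_aux {x y : ℝ} (hx : x ∈ Set.Ioc (0 : ℝ) 1) (hy : y ∈ Set.Ioc (0 : ℝ) 1)
    (h : x ≤ y) :
    Real.log (2 * y - y ^ 2) - Real.log (2 * x - x ^ 2) ≤ Real.log y - Real.log x := by
  obtain ⟨hx0, hx1⟩ := hx
  obtain ⟨hy0, hy1⟩ := hy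
  have hvx : (0:ℝ) < 2 * x - x ^ 2 := by nlinarith
  have hvy : (0:ℝ) < 2 * y - y ^ 2 := by nlinarith
  have key : Real.log ((2 * y - y ^ 2) * x) ≤ Real.log ((2 * x - x ^ 2) * y) := by
    apply Real.log_le_log (by positivity)
    nlinarith [mul_nonneg (mul_nonneg hx0.le hy0.le) (sub_nonneg.2 h)]
  rw [Real.log_mul (ne_of_gt hvy) (ne_of_gt hx0),
      Real.log_mul (ne_of_gt hvx) (ne_of_gt hy0)] at key
  linarith

lemma vlog {x y : ℝ} (hx : x ∈ Set.Ioc (0 : ℝ) 1) (hy : y ∈ Set.Ioc (0 : ℝ) 1) :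
    |Real.log (2 * x - x ^ 2) - Real.log (2 * y - y ^ 2)| ≤ |Real.log x - Real.log y| := by
  rcases le_total x y with h | h
  · have hmono : Real.log (2 * x - x ^ 2) ≤ Real.log (2 * y - y ^ 2) := by
      apply Real.log_le_log (by obtain ⟨a,b⟩ := hx; nlinarith)
      obtain ⟨a, b⟩ := hx; obtain ⟨c, d⟩ := hy; nlinarith
    have hmono' : Real.log x ≤ Real.log y := Real.log_le_log hx.1 h
    rw [abs_sub_comm, abs_of_nonneg (by linarith), abs_sub_comm,
        abs_of_nonneg (by linarith)]
    exact vlog_aux hx hy h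
  · have hmono : Real.log (2 * y - y ^ 2) ≤ Real.log (2 * x - x ^ 2) := by
      apply Real.log_le_log (by obtain ⟨a,b⟩ := hy; nlinarith)
      obtain ⟨a, b⟩ := hx; obtain ⟨c, d⟩ := hy; nlinarith
    have hmono' : Real.log y ≤ Real.log x := Real.log_le_log hy.1 h
    rw [abs_of_nonneg (by linarith), abs_of_nonneg (by linarith)]
    exact vlog_aux hy hx h

lemma step_log (b : Bool) {x y : ℝ} (hx : x ∈ Set.Ioc (0 : ℝ) 1)
    (hy : y ∈ Set.Ioc (0 : ℝ) 1) :
    |Real.log (if b then 2 * x - x ^ 2 else x ^ 2) -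
        Real.log (if b then 2 * y - y ^ 2 else y ^ 2)| ≤
      (if b then 1 else 2) * |Real.log x - Real.log y| := by
  cases b
  · simp only [Bool.false_eq_true, if_false, Real.log_pow]
    push_cast
    rw [← mul_sub, abs_mul]
    simp
  · simpa using vlog hx hy

/-- Theorem 4: upper bound on the partial cumulative-logarithmic
error.  Let `m ≥ 0` and `x, y ∈ (0,1]`.  Then the sum over all `2^m` bit strings
`p` of length `m` of `|ln F_p(x) − ln F_p(y)|` is at most `3^m · |ln x − ln y|`. -/
theorem pcle_upper_bound (m : ℕ) (x y : ℝ)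
    (hx : x ∈ Set.Ioc (0 : ℝ) 1) (hy : y ∈ Set.Ioc (0 : ℝ) 1) :
    ∑ p : Fin m → Bool,
        |Real.log (becF (List.ofFn p) x) - Real.log (becF (List.ofFn p) y)| ≤
      (3 : ℝ) ^ m * |Real.log x - Real.log y| := by
  induction m generalizing x y with
  | zero => simp [becF]
  | succ m ih =>
    have hsum :
        ∑ p : Fin (m + 1) → Bool,
            |Real.log (becF (List.ofFn p) x) - Real.log (becF (List.ofFn p) y)| =
          ∑ b : Bool, ∑ q : Fin m → Bool,
            |Real.log (becF (List.ofFn q) (if b then 2 * x - x ^ 2 else x ^ 2)) -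
              Real.log (becF (List.ofFn q) (if b then 2 * y - y ^ 2 else y ^ 2))| := by
      rw [← (Fin.consEquiv fun _ : Fin (m + 1) => Bool).sum_comp, Fintype.sum_prod_type]
      congr 1
      ext b
      congr 1
      ext q
      simp [Fin.consEquiv, List.ofFn_succ, becF]
    rw [hsum]
    have hb : ∀ b : Bool,
        ∑ q : Fin m → Bool,
            |Real.log (becF (List.ofFn q) (if b then 2 * x - x ^ 2 else x ^ 2)) -
              Real.log (becF (List.ofFn q) (if b then 2 * y - y ^ 2 else y ^ 2))| ≤
          (3 : ℝ) ^ m * ((if b then 1 else 2) * |Real.log x - Real.log y|) := by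
      intro b
      calc _ ≤ (3 : ℝ) ^ m *
            |Real.log (if b then 2 * x - x ^ 2 else x ^ 2) -
              Real.log (if b then 2 * y - y ^ 2 else y ^ 2)| :=
              ih _ _ (step_mem b hx) (step_mem b hy)
        _ ≤ _ := by
              apply mul_le_mul_of_nonneg_left (step_log b hx hy) (by positivity)
    calc ∑ b : Bool, _ ≤ ∑ b : Bool, (3 : ℝ) ^ m * ((if b then 1 else 2) * |Real.log x - Real.log y|) :=
          Finset.sum_le_sum fun b _ => hb b
      _ = (3 : ℝ) ^ (m + 1) * |Real.log x - Real.log y| := by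
          simp [Fintype.sum_bool]; ring
end

section
/- (Chung's approximation has a nonempty polarization violation set.) For every t with 0 < t ≤ 0.0293, Chung's approximation function satisfies φ_C(t) = exp(−0.4527·t^{0.86} + 0.0218) ≥ 1; in particular φ_C exceeds 1 near 0, so it cannot satisfy the condition 0 < Ω(t) < 1 required by Proposition 3. -/
/-- Chung's approximation has a nonempty polarization violation set.
For every `t` with `0 < t ≤ 0.0293`, Chung's approximation function satisfies
`φ_C(t) = exp(−0.4527·t^{0.86} + 0.0218) ≥ 1`. -/
theorem chung_ge_one_near_zero :
    ∀ t : ℝ, 0 < t → t ≤ 0.0293 →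
      1 ≤ Real.exp (-0.4527 * t ^ (0.86 : ℝ) + 0.0218) := by
  intro t ht ht2
  rw [Real.one_le_exp_iff]
  have h1 : t ^ (0.86 : ℝ) ≤ (0.0293 : ℝ) ^ (0.86 : ℝ) :=
    Real.rpow_le_rpow ht.le ht2 (by norm_num)
  have h2 : (0.0293 : ℝ) ^ (0.86 : ℝ) ≤ 0.0481 := by
    rw [← Real.rpow_le_rpow_iff (by positivity) (by norm_num : (0:ℝ) ≤ 0.0481)
      (show (0:ℝ) < 50 by norm_num)]
    have e1 : ((0.0293 : ℝ) ^ (0.86 : ℝ)) ^ (50 : ℝ) = (0.0293 : ℝ) ^ (43 : ℕ) := by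
      rw [← Real.rpow_natCast ((0.0293:ℝ)) 43, ← Real.rpow_mul (by norm_num)]
      norm_num
    have e2 : ((0.0481 : ℝ)) ^ (50 : ℝ) = (0.0481 : ℝ) ^ (50 : ℕ) := by
      rw [← Real.rpow_natCast ((0.0481:ℝ)) 50]; norm_num
    rw [e1, e2]
    norm_num
  nlinarith [h1, h2]
end

section
/- (Chung's approximation exhibits polarization reversal.) With φ_C(t) = exp(−0.4527·t^{0.86} + 0.0218), the point t = 0.01 satisfies the polarization reversal inequality 2·φ_C(0.01) − φ_C(0.01)² ≤ φ_C(0.02); hence the polarization reversal set of Chung's approximation is nonempty. -/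
/-- Chung's approximation exhibits polarization reversal.
With `φ_C(t) = exp(−0.4527·t^{0.86} + 0.0218)`, the point `t = 0.01` satisfies the
polarization reversal inequality `2·φ_C(0.01) − φ_C(0.01)² ≤ φ_C(0.02)`. -/
theorem chung_polarization_reversal :
    2 * Real.exp (-0.4527 * (0.01 : ℝ) ^ (0.86 : ℝ) + 0.0218) -
        (Real.exp (-0.4527 * (0.01 : ℝ) ^ (0.86 : ℝ) + 0.0218)) ^ 2 ≤
      Real.exp (-0.4527 * (0.02 : ℝ) ^ (0.86 : ℝ) + 0.0218) := by
  have h1 : (0.02 : ℝ) ^ (0.86 : ℝ) ≤ (0.02 : ℝ) ^ (0.8 : ℝ) :=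
    Real.rpow_le_rpow_of_exponent_ge (by norm_num) (by norm_num) (by norm_num)
  have h2 : (0.02 : ℝ) ^ (0.8 : ℝ) ≤ 0.044 := by
    have key : ((0.02 : ℝ) ^ (0.8 : ℝ)) ^ (5 : ℕ) ≤ (0.044 : ℝ) ^ (5 : ℕ) := by
      have : ((0.02 : ℝ) ^ (0.8 : ℝ)) ^ (5 : ℕ) = (0.02 : ℝ) ^ (4 : ℕ) := by
        rw [← Real.rpow_natCast ((0.02 : ℝ) ^ (0.8 : ℝ)) 5,
          ← Real.rpow_mul (by norm_num)]
        norm_num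
      rw [this]; norm_num
    have hnn : (0 : ℝ) ≤ (0.02 : ℝ) ^ (0.8 : ℝ) := Real.rpow_nonneg (by norm_num) _
    exact (pow_le_pow_iff_left₀ hnn (by norm_num) (by norm_num)).mp key
  have hexp : (0 : ℝ) ≤ -0.4527 * (0.02 : ℝ) ^ (0.86 : ℝ) + 0.0218 := by
    have h0 : (0 : ℝ) ≤ (0.02 : ℝ) ^ (0.86 : ℝ) := Real.rpow_nonneg (by norm_num) _
    nlinarith
  have hR : (1 : ℝ) ≤ Real.exp (-0.4527 * (0.02 : ℝ) ^ (0.86 : ℝ) + 0.0218) :=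
    Real.one_le_exp hexp
  set x := Real.exp (-0.4527 * (0.01 : ℝ) ^ (0.86 : ℝ) + 0.0218)
  nlinarith [sq_nonneg (x - 1)]
end

section
/- (AGA-2 satisfies design Rule 1.) The two-segment function Ω₂, defined by Ω₂(t) = exp(0.0116·t² − 0.4212·t) for 0 < t ≤ 7.0633 and Ω₂(t) = exp(−0.2944·t − 0.3169) for t > 7.0633, satisfies 0 < Ω₂(t) < 1 for every t > 0; hence its polarization violation set and polarization reversal set are both empty. -/
/-- The two-segment AGA-2 approximation function `Ω₂`. -/
noncomputable def omega2 (t : ℝ) : ℝ :=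
  if t ≤ 7.0633 then Real.exp (0.0116 * t ^ 2 - 0.4212 * t)
  else Real.exp (-0.2944 * t - 0.3169)

/-- AGA-2 satisfies design Rule 1: `0 < Ω₂(t) < 1` for every `t > 0`
(hence, by Proposition 3, its polarization violation set and polarization reversal
set are both empty). -/
theorem omega2_rule1 : ∀ t : ℝ, 0 < t → 0 < omega2 t ∧ omega2 t < 1 := by
  intro t ht
  unfold omega2
  split_ifs with h
  · refine ⟨Real.exp_pos _, ?_⟩
    rw [show (1:ℝ) = Real.exp 0 from (Real.exp_zero).symm]
    apply Real.exp_lt_exp.mpr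
    nlinarith
  · refine ⟨Real.exp_pos _, ?_⟩
    rw [show (1:ℝ) = Real.exp 0 from (Real.exp_zero).symm]
    apply Real.exp_lt_exp.mpr
    push_neg at h
    nlinarith
end

section
/- (AGA-3 satisfies design Rule 1.) The three-segment function Ω₃, defined by Ω₃(t) = exp(0.06725·t² − 0.4908·t) for 0 < t ≤ 0.6357, Ω₃(t) = exp(−0.4527·t^{0.86} + 0.0218) for 0.6357 < t ≤ 9.2254, and Ω₃(t) = exp(−0.2832·t − 0.4254) for t > 9.2254, satisfies 0 < Ω₃(t) < 1 for every t > 0; hence its polarization violation set and polarization reversal set are both empty. -/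
/-- The three-segment AGA-3 approximation function `Ω₃`. -/
noncomputable def omega3 (t : ℝ) : ℝ :=
  if t ≤ 0.6357 then Real.exp (0.06725 * t ^ 2 - 0.4908 * t)
  else if t ≤ 9.2254 then Real.exp (-0.4527 * t ^ (0.86 : ℝ) + 0.0218)
  else Real.exp (-0.2832 * t - 0.4254)

/-- AGA-3 satisfies design Rule 1: `0 < Ω₃(t) < 1` for every `t > 0`
(hence, by Proposition 3, its polarization violation set and polarization reversal
set are both empty). -/
theorem omega3_rule1 : ∀ t : ℝ, 0 < t → 0 < omega3 t ∧ omega3 t < 1 := by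
  intro t ht
  unfold omega3
  split_ifs with h1 h2
  · refine ⟨Real.exp_pos _, Real.exp_lt_one_iff.mpr ?_⟩
    nlinarith
  · refine ⟨Real.exp_pos _, Real.exp_lt_one_iff.mpr ?_⟩
    push_neg at h1
    have hpow : (0.0482 : ℝ) < t ^ (0.86 : ℝ) := by
      rcases le_or_gt t 1 with hle | hgt
      · have : t ^ (1 : ℝ) ≤ t ^ (0.86 : ℝ) :=
          Real.rpow_le_rpow_of_exponent_ge ht hle (by norm_num)
        rw [Real.rpow_one] at this
        linarith
      · have : (1 : ℝ) ^ (0.86 : ℝ) ≤ t ^ (0.86 : ℝ) :=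
          Real.rpow_le_rpow (by norm_num) hgt.le (by norm_num)
        rw [Real.one_rpow] at this
        linarith
    nlinarith
  · exact ⟨Real.exp_pos _, Real.exp_lt_one_iff.mpr (by push_neg at h2; nlinarith)⟩
end

section
/- (AGA-4 satisfies design Rule 1.) The four-segment function Ω₄, defined by Ω₄(t) = exp(0.1047·t² − 0.4992·t) for 0 < t ≤ 0.1910, Ω₄(t) = 0.9981·exp(0.05315·t² − 0.4795·t) for 0.1910 < t ≤ 0.7420, Ω₄(t) = exp(−0.4527·t^{0.86} + 0.0218) for 0.7420 < t ≤ 9.2254, and Ω₄(t) = exp(−0.2832·t − 0.4254) for t > 9.2254, satisfies 0 < Ω₄(t) < 1 for every t > 0; hence its polarization violation set and polarization reversal set are both empty. -/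
/-- The four-segment AGA-4 approximation function `Ω₄`. -/
noncomputable def omega4 (t : ℝ) : ℝ :=
  if t ≤ 0.1910 then Real.exp (0.1047 * t ^ 2 - 0.4992 * t)
  else if t ≤ 0.7420 then 0.9981 * Real.exp (0.05315 * t ^ 2 - 0.4795 * t)
  else if t ≤ 9.2254 then Real.exp (-0.4527 * t ^ (0.86 : ℝ) + 0.0218)
  else Real.exp (-0.2832 * t - 0.4254)

/-- AGA-4 satisfies design Rule 1: `0 < Ω₄(t) < 1` for every `t > 0`
(hence, by Proposition 3, its polarization violation set and polarization reversal
set are both empty). -/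
theorem omega4_rule1 : ∀ t : ℝ, 0 < t → 0 < omega4 t ∧ omega4 t < 1 := by
  intro t ht
  unfold omega4
  split_ifs with h1 h2 h3
  · refine ⟨Real.exp_pos _, ?_⟩
    rw [← Real.exp_zero]
    apply Real.exp_lt_exp.mpr
    nlinarith
  · constructor
    · positivity
    · have hexp : Real.exp (0.05315 * t ^ 2 - 0.4795 * t) < 1 := by
        rw [← Real.exp_zero]
        apply Real.exp_lt_exp.mpr
        nlinarith
      nlinarith [Real.exp_pos (0.05315 * t ^ 2 - 0.4795 * t)]
  · refine ⟨Real.exp_pos _, ?_⟩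
    rw [← Real.exp_zero]
    apply Real.exp_lt_exp.mpr
    have hpow : (0.742 : ℝ) < t ^ (0.86 : ℝ) := by
      push_neg at h2
      rcases le_or_gt t 1 with hle | hlt
      · have : t ^ (1 : ℝ) ≤ t ^ (0.86 : ℝ) :=
          Real.rpow_le_rpow_of_exponent_ge ht hle (by norm_num)
        rw [Real.rpow_one] at this
        linarith
      · have : (1 : ℝ) ^ (0.86 : ℝ) ≤ t ^ (0.86 : ℝ) :=
          Real.rpow_le_rpow (by norm_num) hlt.le (by norm_num)
        rw [Real.one_rpow] at this
        linarith
    nlinarith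
  · refine ⟨Real.exp_pos _, ?_⟩
    rw [← Real.exp_zero]
    apply Real.exp_lt_exp.mpr
    push_neg at h3
    nlinarith
end
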